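/- arXiv:1407.0890 — 3 statements merged into one kernel-verified Lean document; each statement's English description precedes it below -/
import Mathlib

section
/- Let Γ be an almost normal subgroup of G such that [Γ : Γ_σ] = [Γ : Γ_{σ⁻¹}] for every σ ∈ G. For σ ∈ G let T_σ be the Hecke operator on finitely supported functions on Γ\G defined by T_σ[Γg] = Σᵢ [Γσᵢg], where ΓσΓ = ⨆ᵢ Γσᵢ. Then for all σ, τ ∈ G the coefficient of [Γ] in T_σT_τ[Γ] equals the coefficient of [Γ] in T_τT_σ[Γ]; that is, the vector state at [Γ] is a trace on the Hecke algebra. -/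
/-!
Write `ΓσΓ = ⨆ᵢ Γaᵢ` and `ΓτΓ = ⨆ⱼ Γbⱼ`. For fixed `j` there is at most one `i` with
`aᵢbⱼ ∈ Γ`, i.e. `bⱼ⁻¹ ∈ Γaᵢ`, and there is one iff `bⱼ⁻¹ ∈ ΓσΓ`. Since `bⱼ ∈ ΓτΓ`, this holds
for all `j` or for none, according as `ΓτΓ = Γσ⁻¹Γ` or not, and the condition is symmetric in
`σ, τ`. So both counts vanish, or they are `k` and `m`, the numbers of cosets `Γy` in `Γσ⁻¹Γ` and
`ΓσΓ`. The map `γ ↦ Γxγ⁻¹` identifies `Γ ⧸ (Γ ∩ x⁻¹Γx)` with the cosets `Γy` in `ΓxΓ`, so these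
numbers are `[Γ : Γ_σ]` and `[Γ : Γ_{σ⁻¹}]`, which are equal by hypothesis.
-/

open DoubleCoset

namespace DoubleCoset

variable {G : Type*} [Group G]

lemma inv_mem_doubleCoset_inv {H K : Subgroup G} {a b : G} (hb : b ∈ doubleCoset a H K) :
    b⁻¹ ∈ doubleCoset a⁻¹ K H := by
  obtain ⟨h, hh, k, hk, rfl⟩ := mem_doubleCoset.1 hb
  exact mem_doubleCoset.2 ⟨k⁻¹, K.inv_mem hk, h⁻¹, H.inv_mem hh, by group⟩

lemma mem_doubleCoset_iff_doubleCoset_eq {H K : Subgroup G} {a b : G} :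
    b ∈ doubleCoset a H K ↔ doubleCoset b H K = doubleCoset a H K :=
  ⟨doubleCoset_eq_of_mem, fun h => h ▸ mem_doubleCoset_self H K b⟩

lemma inv_mem_doubleCoset_comm {H : Subgroup G} {a b : G} :
    b⁻¹ ∈ doubleCoset a H H ↔ a⁻¹ ∈ doubleCoset b H H := by
  suffices ∀ a b : G, b⁻¹ ∈ doubleCoset a H H → a⁻¹ ∈ doubleCoset b H H from
    ⟨this a b, this b a⟩
  intro a b h
  have hb : b ∈ doubleCoset a⁻¹ H H := by simpa using inv_mem_doubleCoset_inv h
  exact mem_doubleCoset_iff_doubleCoset_eq.2 (doubleCoset_eq_of_mem hb).symm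

end DoubleCoset

lemma Subgroup.mem_map_conj_inv {G : Type*} [Group G] {Γ : Subgroup G} {x g : G} :
    g ∈ Γ.map (MulAut.conj x⁻¹).toMonoidHom ↔ x * g * x⁻¹ ∈ Γ := by
  rw [Subgroup.mem_map_equiv]
  simp

section CosetDecomposition

variable {G ι κ : Type*} [Group G] {Γ : Subgroup G} {x : G} {c : ι → G}

/-- `c` indexes a decomposition `ΓxΓ = ⨆ᵢ Γcᵢ` into cosets of the form `Γy`. -/
structure IsCosetDecomposition (Γ : Subgroup G) (x : G) (c : ι → G) : Prop where
  mem : ∀ i, c i ∈ doubleCoset x Γ Γ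
  exists_mul_inv_mem : ∀ y ∈ doubleCoset x Γ Γ, ∃ i, y * (c i)⁻¹ ∈ Γ
  eq_of_mul_inv_mem : ∀ i j, c i * (c j)⁻¹ ∈ Γ → i = j

lemma mem_setOf_exists_mul_eq_iff {y c : G} :
    y ∈ {z : G | ∃ γ ∈ Γ, z = γ * c} ↔ y * c⁻¹ ∈ Γ :=
  ⟨fun ⟨γ, hγ, h⟩ => by simpa [h] using hγ, fun h => ⟨y * c⁻¹, h, by group⟩⟩

namespace IsCosetDecomposition

lemma of_iUnion_eq
    (hD : {z : G | ∃ γ ∈ Γ, ∃ γ' ∈ Γ, z = γ * x * γ'}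
      = ⋃ i, {z : G | ∃ γ ∈ Γ, z = γ * c i})
    (hdisj : ∀ i j, i ≠ j →
      Disjoint {z : G | ∃ γ ∈ Γ, z = γ * c i} {z : G | ∃ γ ∈ Γ, z = γ * c j}) :
    IsCosetDecomposition Γ x c := by
  have hself : ∀ i, c i * (c i)⁻¹ ∈ Γ := fun i => by simp
  have hD' : ∀ y, y ∈ doubleCoset x Γ Γ ↔ ∃ i, y * (c i)⁻¹ ∈ Γ := fun y => by
    have : doubleCoset x Γ Γ = {z : G | ∃ γ ∈ Γ, ∃ γ' ∈ Γ, z = γ * x * γ'} :=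
      Set.ext fun _ => mem_doubleCoset
    simp only [this, hD, Set.mem_iUnion, mem_setOf_exists_mul_eq_iff]
  refine ⟨fun i => (hD' _).2 ⟨i, hself i⟩, fun y hy => (hD' y).1 hy, fun i j h => ?_⟩
  by_contra hij
  exact Set.disjoint_left.1 (hdisj i j hij) (mem_setOf_exists_mul_eq_iff.2 (hself i))
    (mem_setOf_exists_mul_eq_iff.2 h)

lemma mul_inv_mem_iff (h : IsCosetDecomposition Γ x c) {y : G} {i j : ι}
    (hy : y * (c i)⁻¹ ∈ Γ) : y * (c j)⁻¹ ∈ Γ ↔ i = j := by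
  refine ⟨fun hj => h.eq_of_mul_inv_mem i j ?_, fun hij => hij ▸ hy⟩
  simpa [mul_assoc] using Γ.mul_mem (Γ.inv_mem hy) hj

lemma mem_of_mul_inv_mem (h : IsCosetDecomposition Γ x c) {y : G} {i : ι}
    (hy : y * (c i)⁻¹ ∈ Γ) : y ∈ doubleCoset x Γ Γ := by
  obtain ⟨u, hu, v, hv, hc⟩ := mem_doubleCoset.1 (h.mem i)
  refine mem_doubleCoset.2 ⟨y * (c i)⁻¹ * u, Γ.mul_mem hy hu, v, hv, ?_⟩
  rw [mul_assoc _ u, mul_assoc _ (u * x), ← hc, inv_mul_cancel_right]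

lemma congr (h : IsCosetDecomposition Γ x c) {y : G} (hy : y ∈ doubleCoset x Γ Γ) :
    IsCosetDecomposition Γ y c := by
  have hxy := doubleCoset_eq_of_mem hy
  exact ⟨hxy ▸ h.mem, hxy ▸ h.exists_mul_inv_mem, h.eq_of_mul_inv_mem⟩

lemma card_eq_relIndex (h : IsCosetDecomposition Γ x c) :
    Nat.card ι = (Γ ⊓ Γ.map (MulAut.conj x⁻¹).toMonoidHom).relIndex Γ := by
  set S := (Γ ⊓ Γ.map (MulAut.conj x⁻¹).toMonoidHom).subgroupOf Γ
  have hx : ∀ γ : Γ, x * (γ : G)⁻¹ ∈ doubleCoset x Γ Γ := fun γ =>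
    mem_doubleCoset.2 ⟨1, Γ.one_mem, _, Γ.inv_mem γ.2, by group⟩
  choose f hf using fun γ : Γ => h.exists_mul_inv_mem _ (hx γ)
  have hker : Setoid.ker f = QuotientGroup.leftRel S := by
    ext γ γ'
    rw [Setoid.ker_def, QuotientGroup.leftRel_apply, Subgroup.mem_subgroupOf, Subgroup.mem_inf,
      and_iff_right (γ⁻¹ * γ').2, Subgroup.mem_map_conj_inv, ← h.mul_inv_mem_iff (hf γ)]
    have : x * (γ : G)⁻¹ * (c (f γ'))⁻¹
        = x * ((γ⁻¹ * γ' : Γ) : G) * x⁻¹ * (x * (γ' : G)⁻¹ * (c (f γ'))⁻¹) := by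
      simp only [Subgroup.coe_mul, Subgroup.coe_inv]
      group
    rw [this, Subgroup.mul_mem_cancel_right _ (hf γ')]
  have hsurj : Function.Surjective f := by
    intro i
    obtain ⟨u, hu, v, hv, hc⟩ := mem_doubleCoset.1 (h.mem i)
    refine ⟨⟨v⁻¹, Γ.inv_mem hv⟩, (h.mul_inv_mem_iff (hf _)).1 ?_⟩
    have : x * (v⁻¹)⁻¹ * (c i)⁻¹ = u⁻¹ := by rw [hc]; group
    exact this ▸ Γ.inv_mem hu
  rw [Subgroup.relIndex, Subgroup.index_eq_card,
    ← Nat.card_congr (Setoid.quotientKerEquivOfSurjective f hsurj), hker]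
  rfl

lemma card_mul_mem (h : IsCosetDecomposition Γ x c) (b : κ → G) :
    Nat.card {p : ι × κ // c p.1 * b p.2 ∈ Γ}
      = Nat.card {j : κ // (b j)⁻¹ ∈ doubleCoset x Γ Γ} := by
  have hinv : ∀ i j, c i * b j ∈ Γ ↔ (b j)⁻¹ * (c i)⁻¹ ∈ Γ := fun i j => by
    rw [← Γ.inv_mem_iff, mul_inv_rev]
  refine Nat.card_eq_of_bijective
    (fun p => ⟨p.1.2, h.mem_of_mul_inv_mem ((hinv _ _).1 p.2)⟩) ⟨?_, ?_⟩
  · rintro ⟨⟨i, j⟩, hij⟩ ⟨⟨i', j'⟩, hij'⟩ hjj'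
    obtain rfl : j = j' := congrArg Subtype.val hjj'
    obtain rfl : i = i' := (h.mul_inv_mem_iff ((hinv _ _).1 hij)).1 ((hinv _ _).1 hij')
    rfl
  · rintro ⟨j, hj⟩
    obtain ⟨i, hi⟩ := h.exists_mul_inv_mem _ hj
    exact ⟨⟨(i, j), (hinv i j).2 hi⟩, rfl⟩

open scoped Classical in
lemma card_mul_mem_eq_ite (h : IsCosetDecomposition Γ x c) {y : G} {b : κ → G}
    (hb : ∀ j, b j ∈ doubleCoset y Γ Γ) :
    Nat.card {p : ι × κ // c p.1 * b p.2 ∈ Γ}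
      = if y⁻¹ ∈ doubleCoset x Γ Γ then Nat.card κ else 0 := by
  have hall : ∀ j, (b j)⁻¹ ∈ doubleCoset x Γ Γ ↔ y⁻¹ ∈ doubleCoset x Γ Γ := fun j => by
    rw [mem_doubleCoset_iff_doubleCoset_eq, mem_doubleCoset_iff_doubleCoset_eq (b := y⁻¹),
      doubleCoset_eq_of_mem (inv_mem_doubleCoset_inv (hb j))]
  rw [h.card_mul_mem]
  simp only [hall]
  split_ifs with hy
  · exact Nat.card_congr (Equiv.subtypeUnivEquiv fun _ => hy)
  · simp [hy]

end IsCosetDecomposition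

end CosetDecomposition

theorem stmt4_general {G : Type*} [Group G] (Γ : Subgroup G)
    (hsym : ∀ g : G, (Γ ⊓ Γ.map (MulAut.conj g).toMonoidHom).relIndex Γ
      = (Γ ⊓ Γ.map (MulAut.conj g⁻¹).toMonoidHom).relIndex Γ)
    (σ τ : G) (m k : ℕ) (a : Fin m → G) (b : Fin k → G)
    (hDa : {x : G | ∃ γ ∈ Γ, ∃ γ' ∈ Γ, x = γ * σ * γ'}
      = ⋃ i, {x : G | ∃ γ ∈ Γ, x = γ * a i})
    (hdisja : ∀ i j : Fin m, i ≠ j →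
      Disjoint {x : G | ∃ γ ∈ Γ, x = γ * a i} {x : G | ∃ γ ∈ Γ, x = γ * a j})
    (hDb : {x : G | ∃ γ ∈ Γ, ∃ γ' ∈ Γ, x = γ * τ * γ'}
      = ⋃ j, {x : G | ∃ γ ∈ Γ, x = γ * b j})
    (hdisjb : ∀ i j : Fin k, i ≠ j →
      Disjoint {x : G | ∃ γ ∈ Γ, x = γ * b i} {x : G | ∃ γ ∈ Γ, x = γ * b j}) :
    Nat.card {p : Fin m × Fin k // a p.1 * b p.2 ∈ Γ}
      = Nat.card {p : Fin k × Fin m // b p.1 * a p.2 ∈ Γ} := by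
  have ha := IsCosetDecomposition.of_iUnion_eq hDa hdisja
  have hb := IsCosetDecomposition.of_iUnion_eq hDb hdisjb
  rw [ha.card_mul_mem_eq_ite hb.mem, hb.card_mul_mem_eq_ite ha.mem, inv_mem_doubleCoset_comm]
  split_ifs with hστ
  · rw [(hb.congr hστ).card_eq_relIndex, ha.card_eq_relIndex, inv_inv, hsym]
  · rfl

/-- For an almost normal subgroup `Γ ≤ G` with `[Γ : Γ_σ] = [Γ : Γ_{σ⁻¹}]` for all `σ`,
the vector state at `[Γ]` is a trace on the Hecke algebra: given decompositions
`ΓσΓ = ⊔ᵢ Γaᵢ` and `ΓτΓ = ⊔ⱼ Γbⱼ` into left cosets, the coefficient of `[Γ]` in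
`T_σT_τ[Γ]` equals the coefficient of `[Γ]` in `T_τT_σ[Γ]`. -/
theorem stmt4 {G : Type*} [Group G] (Γ : Subgroup G)
    (hal : ∀ g : G, (Γ ⊓ Γ.map (MulAut.conj g).toMonoidHom).relIndex Γ ≠ 0)
    (hsym : ∀ g : G, (Γ ⊓ Γ.map (MulAut.conj g).toMonoidHom).relIndex Γ
      = (Γ ⊓ Γ.map (MulAut.conj g⁻¹).toMonoidHom).relIndex Γ)
    (σ τ : G) (m k : ℕ) (a : Fin m → G) (b : Fin k → G)
    (hDa : {x : G | ∃ γ ∈ Γ, ∃ γ' ∈ Γ, x = γ * σ * γ'}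
      = ⋃ i, {x : G | ∃ γ ∈ Γ, x = γ * a i})
    (hdisja : ∀ i j : Fin m, i ≠ j →
      Disjoint {x : G | ∃ γ ∈ Γ, x = γ * a i} {x : G | ∃ γ ∈ Γ, x = γ * a j})
    (hDb : {x : G | ∃ γ ∈ Γ, ∃ γ' ∈ Γ, x = γ * τ * γ'}
      = ⋃ j, {x : G | ∃ γ ∈ Γ, x = γ * b j})
    (hdisjb : ∀ i j : Fin k, i ≠ j →
      Disjoint {x : G | ∃ γ ∈ Γ, x = γ * b i} {x : G | ∃ γ ∈ Γ, x = γ * b j}) :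
    Nat.card {p : Fin m × Fin k // a p.1 * b p.2 ∈ Γ}
      = Nat.card {p : Fin k × Fin m // b p.1 * a p.2 ∈ Γ} :=
  stmt4_general Γ hsym σ τ m k a b hDa hdisja hDb hdisjb
end

section
/- Let π be a unitary representation of a group G on H, Γ ≤ G, L a Γ-wandering generating subspace for π|_Γ with projection P_L, and P₀ an orthogonal projection on H commuting with π(g) for all g ∈ G. Set π₀(g) = P₀π(g)P₀. Then for all σ₁, σ₂ ∈ G, the family (π₀(σ₁γ) P_L π₀(γ⁻¹σ₂))_{γ∈Γ} is summable in the strong operator topology with sum π₀(σ₁σ₂). In particular Σ_{γ∈Γ} P_L π₀(σ₁γ) P_L π₀(γ⁻¹σ₂) P_L = P_L π₀(σ₁σ₂) P_L. -/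
open scoped InnerProductSpace

/-!
The translates `π γ L`, `γ ∈ Γ`, are mutually orthogonal closed subspaces with dense span, so
for every `y` the projections `π γ P_L π γ⁻¹ y` onto them sum to `y`: the partial sums are the
projections onto finite spans, which increase to the identity. Applying this to
`y = π(σ₂) P₀ x` and mapping through the bounded operator `P₀ π(σ₁)` gives the first sum, since
`P₀` commutes with `π`; applying `P_L` gives the second.
-/

section

variable {ι 𝕜 E : Type*} [RCLike 𝕜] [NormedAddCommGroup E] [InnerProductSpace 𝕜 E]
  {V : ι → Submodule 𝕜 E} [∀ i, (V i).HasOrthogonalProjection]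

theorem sub_sum_starProjection_mem_orthogonal_biSup (hV : Pairwise fun i j => V i ⟂ V j)
    (s : Finset ι) (x : E) :
    x - ∑ i ∈ s, (V i).starProjection x ∈ (⨆ i ∈ s, V i)ᗮ := by
  classical
  rw [← Submodule.span_singleton_le_iff_mem]
  change (𝕜 ∙ _) ⟂ _
  simp only [Submodule.isOrtho_iSup_right]
  intro i hi
  refine (Submodule.span_singleton_le_iff_mem _ _).2 ?_
  rw [← Finset.add_sum_erase s _ hi, ← sub_sub]
  refine Submodule.sub_mem _ ((V i).sub_starProjection_mem_orthogonal x) (Submodule.sum_mem _ ?_)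
  intro j hj
  exact hV (Finset.ne_of_mem_erase hj) ((V j).starProjection_apply_mem x)

theorem hasSum_starProjection_of_isOrtho (hV : Pairwise fun i j => V i ⟂ V j)
    (hdense : (⨆ i, V i).topologicalClosure = ⊤) (x : E) :
    HasSum (fun i => (V i).starProjection x) x := by
  let U : Finset ι → Submodule 𝕜 E := fun s => ⨆ i ∈ s, V i
  have : ∀ s, (U s).HasOrthogonalProjection := fun s =>
    ⟨fun v => ⟨_, Submodule.sum_mem_biSup fun i _ => (V i).starProjection_apply_mem v,
      sub_sum_starProjection_mem_orthogonal_biSup hV s v⟩⟩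
  have hU : ∀ s, (U s).starProjection x = ∑ i ∈ s, (V i).starProjection x := fun s =>
    (U s).eq_starProjection_of_mem_orthogonal
      (Submodule.sum_mem_biSup fun i _ => (V i).starProjection_apply_mem x)
      (sub_sum_starProjection_mem_orthogonal_biSup hV s x)
  have hmono : Monotone U := fun s t hst => biSup_mono fun i hi => hst hi
  have := Submodule.starProjection_tendsto_self U hmono x (by rw [← iSup_eq_iSup_finset, hdense])
  simp only [hU] at this
  exact this

end

section

variable {𝕜 G E : Type*} [RCLike 𝕜] [Group G] [NormedAddCommGroup E] [InnerProductSpace 𝕜 E]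
  (π : G →* (E →L[𝕜] E))

noncomputable def MonoidHom.isometryEquivOfInner (hπ : ∀ g x y, ⟪π g x, π g y⟫_𝕜 = ⟪x, y⟫_𝕜)
    (g : G) : E ≃ₗᵢ[𝕜] E :=
  (ContinuousLinearEquiv.unitsEquiv 𝕜 E (π.toHomUnits g)).toLinearEquiv.isometryOfInner (hπ g)

theorem pairwise_isOrtho_map_of_wandering {Γ : Subgroup G} {L : Submodule 𝕜 E}
    (horth : ∀ γ γ' : Γ, γ ≠ γ' → ∀ x ∈ L, ∀ y ∈ L, ⟪π ↑γ x, π ↑γ' y⟫_𝕜 = 0) :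
    Pairwise fun γ γ' : Γ => L.map (π γ).toLinearMap ⟂ L.map (π γ').toLinearMap := by
  rintro γ γ' hne
  rw [Submodule.isOrtho_iff_inner_eq]
  rintro _ ⟨x, hx, rfl⟩ _ ⟨y, hy, rfl⟩
  exact horth γ γ' hne x hx y hy

theorem hasSum_translate_starProjection_of_wandering
    (hπ : ∀ g x y, ⟪π g x, π g y⟫_𝕜 = ⟪x, y⟫_𝕜) (Γ : Subgroup G) (L : Submodule 𝕜 E)
    [L.HasOrthogonalProjection]
    (horth : ∀ γ γ' : Γ, γ ≠ γ' → ∀ x ∈ L, ∀ y ∈ L, ⟪π ↑γ x, π ↑γ' y⟫_𝕜 = 0)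
    (hgen : (⨆ γ : Γ, L.map (π ↑γ).toLinearMap).topologicalClosure = ⊤) (y : E) :
    HasSum (fun γ : Γ => π γ (L.starProjection (π (γ : G)⁻¹ y))) y := by
  let e : G → E ≃ₗᵢ[𝕜] E := π.isometryEquivOfInner hπ
  have : ∀ γ : Γ, (L.map (π γ).toLinearMap).HasOrthogonalProjection := fun γ =>
    Submodule.HasOrthogonalProjection.map_linearIsometryEquiv L (e γ)
  convert hasSum_starProjection_of_isOrtho (pairwise_isOrtho_map_of_wandering π horth) hgen y
    using 2 with γ
  exact (Submodule.starProjection_map_apply (e γ) L y).symm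

end

theorem stmt12_general {G H : Type*} [Group G] [NormedAddCommGroup H] [InnerProductSpace ℂ H]
    (π : G →* (H →L[ℂ] H))
    (hunit : ∀ (g : G) (x y : H), ⟪π g x, π g y⟫_ℂ = ⟪x, y⟫_ℂ)
    (Γ : Subgroup G) (L : Submodule ℂ H)
    (horth : ∀ γ γ' : Γ, γ ≠ γ' → ∀ x ∈ L, ∀ y ∈ L, ⟪π ↑γ x, π ↑γ' y⟫_ℂ = 0)
    (hgen : (⨆ γ : Γ, L.map (π ↑γ).toLinearMap).topologicalClosure = ⊤)
    (P : H →L[ℂ] H)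
    (hPmem : ∀ x : H, P x ∈ L)
    (hPorth : ∀ x : H, ∀ y ∈ L, ⟪x - P x, y⟫_ℂ = 0)
    (P₀ : H →L[ℂ] H) (hP₀idem : P₀.comp P₀ = P₀)
    (hcomm : ∀ g : G, P₀.comp (π g) = (π g).comp P₀)
    (σ₁ σ₂ : G) :
    ∀ x : H,
      HasSum (fun γ : Γ =>
          P₀ (π (σ₁ * ↑γ) (P₀ (P (P₀ (π ((↑γ : G)⁻¹ * σ₂) (P₀ x)))))))
        (P₀ (π (σ₁ * σ₂) (P₀ x))) ∧
      HasSum (fun γ : Γ =>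
          P (P₀ (π (σ₁ * ↑γ) (P₀ (P (P₀ (π ((↑γ : G)⁻¹ * σ₂) (P₀ (P x)))))))))
        (P (P₀ (π (σ₁ * σ₂) (P₀ (P x))))) := by
  have : L.HasOrthogonalProjection := ⟨fun v => ⟨P v, hPmem v, (L.mem_orthogonal' _).2 (hPorth v)⟩⟩
  have hP : ∀ v, L.starProjection v = P v := fun v =>
    L.eq_starProjection_of_mem_of_inner_eq_zero (hPmem v) (hPorth v)
  have hP₀π : ∀ g z, P₀ (π g z) = π g (P₀ z) := fun g z => congr($(hcomm g) z)
  have hP₀P₀ : ∀ z, P₀ (P₀ z) = P₀ z := fun z => congr($hP₀idem z)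
  have hsum : ∀ w, HasSum (fun γ : Γ =>
      P₀ (π (σ₁ * ↑γ) (P₀ (P (P₀ (π ((↑γ : G)⁻¹ * σ₂) (P₀ w)))))))
      (P₀ (π (σ₁ * σ₂) (P₀ w))) := by
    intro w
    have hy := hasSum_translate_starProjection_of_wandering π hunit Γ L horth hgen (π σ₂ (P₀ w))
    convert (P₀.comp (π σ₁)).hasSum hy using 1
    · ext γ
      simp only [hP, ContinuousLinearMap.comp_apply, hP₀π, hP₀P₀, map_mul,
        mul_apply_eq_comp]
    · simp only [ContinuousLinearMap.comp_apply, map_mul, mul_apply_eq_comp]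
  exact fun x => ⟨hsum x, P.hasSum (hsum (P x))⟩

/-- With `L` a `Γ`-wandering generating subspace for `π`, `P₀` an orthogonal projection
commuting with `π(G)` and `π₀(g) = P₀π(g)P₀`, for all `σ₁, σ₂ ∈ G` the family
`(π₀(σ₁γ) P_L π₀(γ⁻¹σ₂))_{γ∈Γ}` is summable in the strong operator topology with sum
`π₀(σ₁σ₂)`; in particular `Σ_γ P_L π₀(σ₁γ) P_L π₀(γ⁻¹σ₂) P_L = P_L π₀(σ₁σ₂) P_L`. -/
theorem stmt12 {G H : Type*} [Group G] [NormedAddCommGroup H] [InnerProductSpace ℂ H]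
    [CompleteSpace H] (π : G →* (H →L[ℂ] H))
    (hunit : ∀ (g : G) (x y : H), ⟪π g x, π g y⟫_ℂ = ⟪x, y⟫_ℂ)
    (Γ : Subgroup G) (L : Submodule ℂ H)
    (horth : ∀ γ γ' : Γ, γ ≠ γ' → ∀ x ∈ L, ∀ y ∈ L, ⟪π ↑γ x, π ↑γ' y⟫_ℂ = 0)
    (hgen : (⨆ γ : Γ, L.map (π ↑γ).toLinearMap).topologicalClosure = ⊤)
    (P : H →L[ℂ] H)
    (hPmem : ∀ x : H, P x ∈ L) (hPfix : ∀ x ∈ L, P x = x)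
    (hPorth : ∀ x : H, ∀ y ∈ L, ⟪x - P x, y⟫_ℂ = 0)
    (P₀ : H →L[ℂ] H) (hP₀idem : P₀.comp P₀ = P₀)
    (hP₀sa : ∀ x y : H, ⟪P₀ x, y⟫_ℂ = ⟪x, P₀ y⟫_ℂ)
    (hcomm : ∀ g : G, P₀.comp (π g) = (π g).comp P₀)
    (σ₁ σ₂ : G) :
    ∀ x : H,
      HasSum (fun γ : Γ =>
          P₀ (π (σ₁ * ↑γ) (P₀ (P (P₀ (π ((↑γ : G)⁻¹ * σ₂) (P₀ x)))))))
        (P₀ (π (σ₁ * σ₂) (P₀ x))) ∧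
      HasSum (fun γ : Γ =>
          P (P₀ (π (σ₁ * ↑γ) (P₀ (P (P₀ (π ((↑γ : G)⁻¹ * σ₂) (P₀ (P x)))))))))
        (P (P₀ (π (σ₁ * σ₂) (P₀ (P x))))) :=
  stmt12_general π hunit Γ L horth hgen P hPmem hPorth P₀ hP₀idem hcomm σ₁ σ₂
end

section
/- In the setting of a unitary representation π of G on H, Γ ≤ G, a Γ-wandering generating subspace L with projection P_L, a commuting projection P₀, and π₀(g) = P₀π(g)P₀: if the family (P_L π₀(γ) P_L)_{γ∈Γ} is absolutely summable in operator norm, then its sum 𝒫 = Σ_{γ∈Γ} P_L π₀(γ) P_L is an orthogonal projection (𝒫* = 𝒫 and 𝒫² = 𝒫) acting on L. -/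
/-!
Since `L` is wandering and generating, the maps `π(γ)|_L` make `H` a Hilbert sum of copies of
`L`, which yields the strongly convergent resolution of the identity
`∑_γ π(γ) P π(γ)⁻¹ = 1`. With `T γ = P π₀(γ) P`, commuting `P₀` past `π` gives
`T γ T (γ⁻¹σ) = P P₀ (π(γ) P π(γ)⁻¹) π(σ) P₀ P`, so `∑_γ T γ T (γ⁻¹σ) = T σ`. Absolute
summability lets us write `𝒫² = ∑_{γ,δ} T γ T δ` as this convolution, hence `𝒫² = 𝒫`.
Self-adjointness comes from `(T γ)* = T γ⁻¹`, and `P 𝒫 = 𝒫` puts the range of `𝒫` in `L`.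
-/

open scoped InnerProductSpace

section Convolution

/-- The reindexing `(σ, γ) ↦ (γ, γ⁻¹ * σ)` of `Γ × Γ`. -/
def Equiv.prodInvMul (Γ : Type*) [Group Γ] : Γ × Γ ≃ Γ × Γ :=
  (Equiv.prodComm Γ Γ).trans (Equiv.prodShear (Equiv.refl Γ) fun γ => Equiv.mulLeft γ⁻¹)

variable {R Γ : Type*} [NormedRing R] [CompleteSpace R] [Group Γ] {f g : Γ → R}

theorem summable_mul_inv_mul_of_summable_norm (hf : Summable fun γ => ‖f γ‖)
    (hg : Summable fun γ => ‖g γ‖) :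
    Summable fun q : Γ × Γ => f q.2 * g (q.2⁻¹ * q.1) :=
  (Equiv.prodInvMul Γ).summable_iff.2 (summable_mul_of_summable_norm hf hg)

theorem tsum_mul_tsum_eq_tsum_tsum_mul_inv_mul (hf : Summable fun γ => ‖f γ‖)
    (hg : Summable fun γ => ‖g γ‖) :
    (∑' γ, f γ) * ∑' γ, g γ = ∑' σ, ∑' γ, f γ * g (γ⁻¹ * σ) := by
  rw [tsum_mul_tsum_of_summable_norm hf hg, ← (Equiv.prodInvMul Γ).tsum_eq]
  exact (summable_mul_inv_mul_of_summable_norm hf hg).tsum_prod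

end Convolution

section

variable {𝕜 E G : Type*} [RCLike 𝕜] [NormedAddCommGroup E] [InnerProductSpace 𝕜 E] [Group G]

theorem star_map_eq_map_inv [CompleteSpace E] {π : G →* (E →L[𝕜] E)}
    (hunit : ∀ (g : G) (x y : E), ⟪π g x, π g y⟫_𝕜 = ⟪x, y⟫_𝕜) (g : G) :
    star (π g) = π g⁻¹ := by
  rw [ContinuousLinearMap.star_eq_adjoint, eq_comm, ContinuousLinearMap.eq_adjoint_iff]
  intro x y
  rw [← hunit g, ← mul_apply_eq_comp, ← map_mul, mul_inv_cancel, map_one, one_apply_eq_self]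

theorem ContinuousLinearMap.isSelfAdjoint_of_inner_sub_eq_zero [CompleteSpace E] {L : Submodule 𝕜 E}
    {P : E →L[𝕜] E} (hPmem : ∀ x, P x ∈ L) (hPorth : ∀ x, ∀ y ∈ L, ⟪x - P x, y⟫_𝕜 = 0) :
    IsSelfAdjoint P := by
  have hP : ∀ x y, ⟪x, P y⟫_𝕜 = ⟪P x, P y⟫_𝕜 := fun x y => by
    rw [← sub_eq_zero, ← inner_sub_left, hPorth x _ (hPmem y)]
  refine isSelfAdjoint_iff_isSymmetric.2 fun x y => ?_
  show ⟪P x, y⟫_𝕜 = ⟪x, P y⟫_𝕜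
  rw [hP x y, ← inner_conj_symm, hP y x, inner_conj_symm]

theorem OrthogonalFamily.inner_right_of_hasSum {ι : Type*} {F : ι → Type*}
    [∀ i, NormedAddCommGroup (F i)] [∀ i, InnerProductSpace 𝕜 (F i)] {V : ∀ i, F i →ₗᵢ[𝕜] E}
    (hV : OrthogonalFamily 𝕜 F V) {w : ∀ i, F i} {z : E} (hz : HasSum (fun j => V j (w j)) z)
    (i : ι) (x : F i) : ⟪V i x, z⟫_𝕜 = ⟪x, w i⟫_𝕜 := by
  refine ((innerSL 𝕜 (V i x)).hasSum hz).unique ?_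
  rw [← (V i).inner_map_map x (w i)]
  exact hasSum_single i fun j hj => hV (Ne.symm hj) x (w j)

theorem IsHilbertSum.hasSum_of_inner_eq [CompleteSpace E] {ι : Type*} {F : ι → Type*}
    [∀ i, NormedAddCommGroup (F i)] [∀ i, InnerProductSpace 𝕜 (F i)] {V : ∀ i, F i →ₗᵢ[𝕜] E}
    (hV : IsHilbertSum 𝕜 F V) {z : E} {c : ∀ i, F i} (hc : ∀ i x, ⟪V i x, z⟫_𝕜 = ⟪x, c i⟫_𝕜) :
    HasSum (fun i => V i (c i)) z := by
  have hz := hV.hasSum_linearIsometryEquiv_symm (hV.linearIsometryEquiv z)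
  rw [LinearIsometryEquiv.symm_apply_apply] at hz
  convert hz using 3 with i
  exact ext_inner_left 𝕜 fun x => by
    rw [← hc, hV.OrthogonalFamily.inner_right_of_hasSum hz]

theorem hasSum_conj_apply_of_wandering [CompleteSpace E] {π : G →* (E →L[𝕜] E)}
    (hunit : ∀ (g : G) (x y : E), ⟪π g x, π g y⟫_𝕜 = ⟪x, y⟫_𝕜) {Γ : Subgroup G}
    {L : Submodule 𝕜 E}
    (horth : ∀ γ γ' : Γ, γ ≠ γ' → ∀ x ∈ L, ∀ y ∈ L, ⟪π ↑γ x, π ↑γ' y⟫_𝕜 = 0)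
    (hgen : (⨆ γ : Γ, L.map (π ↑γ).toLinearMap).topologicalClosure = ⊤) {P : E →L[𝕜] E}
    (hPmem : ∀ x, P x ∈ L) (hPfix : ∀ x ∈ L, P x = x) (hP : IsSelfAdjoint P) (z : E) :
    HasSum (fun γ : Γ => (π γ * P * π (γ : G)⁻¹) z) z := by
  have hL : IsClosed (L : Set E) := by
    have hLfix : (L : Set E) = {x | P x = x} :=
      Set.ext fun x => ⟨hPfix x, fun hx : P x = x => hx ▸ hPmem x⟩
    exact hLfix ▸ isClosed_eq P.continuous continuous_id
  have : CompleteSpace L := hL.completeSpace_coe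
  let V : Γ → L →ₗᵢ[𝕜] E := fun γ =>
    ((π γ).toLinearMap.isometryOfInner (hunit γ)).comp L.subtypeₗᵢ
  have hV : IsHilbertSum 𝕜 (fun _ => L) V := by
    refine .mk (fun γ δ hne x y => horth γ δ hne x x.2 y y.2) (le_of_eq ?_)
    rw [← hgen]
    congr 2
    ext γ : 1
    change _ = LinearMap.range ((π γ).toLinearMap ∘ₗ L.subtype)
    rw [LinearMap.range_comp, Submodule.range_subtype]
  refine hV.hasSum_of_inner_eq (c := fun γ => ⟨P (π (γ : G)⁻¹ z), hPmem _⟩) fun γ x => ?_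
  calc ⟪π γ x, z⟫_𝕜 = ⟪(x : E), star (π γ) z⟫_𝕜 := by
        rw [ContinuousLinearMap.star_eq_adjoint, ContinuousLinearMap.adjoint_inner_right]
    _ = ⟪P x, π (γ : G)⁻¹ z⟫_𝕜 := by rw [star_map_eq_map_inv hunit, hPfix x x.2]
    _ = ⟪(x : E), P (π (γ : G)⁻¹ z)⟫_𝕜 := hP.isSymmetric _ _

/-- `P π₀(g) P` with `π₀(g) = P₀ π(g) P₀`. -/
def compressedRep (P P₀ : E →L[𝕜] E) (π : G →* (E →L[𝕜] E)) (g : G) : E →L[𝕜] E :=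
  P * (P₀ * (π g * (P₀ * P)))

section compressedRep

variable {P P₀ : E →L[𝕜] E} {π : G →* (E →L[𝕜] E)}

theorem mul_compressedRep (hP : IsIdempotentElem P) (g : G) :
    P * compressedRep P P₀ π g = compressedRep P P₀ π g := by
  rw [compressedRep, ← mul_assoc, hP.eq]

theorem star_compressedRep [CompleteSpace E] (hP : IsSelfAdjoint P) (hP₀ : IsSelfAdjoint P₀)
    (hπ : ∀ g, star (π g) = π g⁻¹) (g : G) :
    star (compressedRep P P₀ π g) = compressedRep P P₀ π g⁻¹ := by
  simp only [compressedRep, star_mul, hP.star_eq, hP₀.star_eq, hπ, mul_assoc]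

theorem compressedRep_mul_compressedRep (hP : IsIdempotentElem P) (hP₀ : IsIdempotentElem P₀)
    (hcomm : ∀ g, Commute P₀ (π g)) (g h : G) :
    compressedRep P P₀ π g * compressedRep P P₀ π (g⁻¹ * h) =
      P * P₀ * (π g * P * π g⁻¹) * (π h * P₀ * P) := by
  have hP' : ∀ X, P * (P * X) = P * X := fun X => by rw [← mul_assoc, hP.eq]
  have hP₀' : ∀ X, P₀ * (P₀ * X) = P₀ * X := fun X => by rw [← mul_assoc, hP₀.eq]
  have hcomm' : ∀ g X, P₀ * (π g * X) = π g * (P₀ * X) := fun g X => by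
    rw [← mul_assoc, (hcomm g).eq, mul_assoc]
  simp only [compressedRep, map_mul, mul_assoc, hP', hP₀', hcomm']

variable {Γ : Subgroup G}

theorem hasSum_compressedRep_mul_compressedRep_apply (hP : IsIdempotentElem P)
    (hP₀ : IsIdempotentElem P₀) (hcomm : ∀ g, Commute P₀ (π g))
    (hres : ∀ z, HasSum (fun γ : Γ => (π γ * P * π (γ : G)⁻¹) z) z) (σ : Γ) (x : E) :
    HasSum (fun γ : Γ => (compressedRep P P₀ π γ * compressedRep P P₀ π ↑(γ⁻¹ * σ)) x)
      (compressedRep P P₀ π σ x) := by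
  convert (P * P₀).hasSum (hres (π σ (P₀ (P x)))) using 1
  · funext γ
    rw [Subgroup.coe_mul, Subgroup.coe_inv, compressedRep_mul_compressedRep hP hP₀ hcomm]
    rfl
  · rfl

theorem tsum_compressedRep_mul_compressedRep [CompleteSpace E] (hP : IsIdempotentElem P)
    (hP₀ : IsIdempotentElem P₀) (hcomm : ∀ g, Commute P₀ (π g))
    (hres : ∀ z, HasSum (fun γ : Γ => (π γ * P * π (γ : G)⁻¹) z) z)
    (hsum : Summable fun γ : Γ => ‖compressedRep P P₀ π γ‖) (σ : Γ) :
    ∑' γ : Γ, compressedRep P P₀ π γ * compressedRep P P₀ π ↑(γ⁻¹ * σ) =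
      compressedRep P P₀ π σ := by
  ext x
  rw [← (hasSum_compressedRep_mul_compressedRep_apply hP hP₀ hcomm hres σ x).tsum_eq]
  exact (ContinuousLinearMap.apply 𝕜 E x).map_tsum
    ((summable_mul_inv_mul_of_summable_norm hsum hsum).prod_factor σ)

theorem isIdempotentElem_tsum_compressedRep [CompleteSpace E] (hP : IsIdempotentElem P)
    (hP₀ : IsIdempotentElem P₀) (hcomm : ∀ g, Commute P₀ (π g))
    (hres : ∀ z, HasSum (fun γ : Γ => (π γ * P * π (γ : G)⁻¹) z) z)
    (hsum : Summable fun γ : Γ => ‖compressedRep P P₀ π γ‖) :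
    IsIdempotentElem (∑' γ : Γ, compressedRep P P₀ π γ) := by
  rw [IsIdempotentElem, tsum_mul_tsum_eq_tsum_tsum_mul_inv_mul hsum hsum]
  exact tsum_congr (tsum_compressedRep_mul_compressedRep hP hP₀ hcomm hres hsum)

theorem isSelfAdjoint_tsum_compressedRep [CompleteSpace E] (hP : IsSelfAdjoint P)
    (hP₀ : IsSelfAdjoint P₀) (hπ : ∀ g, star (π g) = π g⁻¹) :
    IsSelfAdjoint (∑' γ : Γ, compressedRep P P₀ π γ) := by
  rw [IsSelfAdjoint, tsum_star]
  simp only [star_compressedRep hP hP₀ hπ, ← Subgroup.coe_inv]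
  exact (Equiv.inv Γ).tsum_eq fun γ : Γ => compressedRep P P₀ π γ

theorem mul_tsum_compressedRep (hP : IsIdempotentElem P)
    (hsum : Summable fun γ : Γ => compressedRep P P₀ π γ) :
    P * ∑' γ : Γ, compressedRep P P₀ π γ = ∑' γ : Γ, compressedRep P P₀ π γ := by
  rw [← hsum.tsum_mul_left]
  exact tsum_congr fun γ : Γ => mul_compressedRep hP (γ : G)

end compressedRep

end

/-- If the family `(P_L π₀(γ) P_L)_{γ∈Γ}` is absolutely summable in operator norm, its
sum `𝒫 = Σ_{γ∈Γ} P_L π₀(γ) P_L` is an orthogonal projection acting on `L`. -/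
theorem stmt13 {G H : Type*} [Group G] [NormedAddCommGroup H] [InnerProductSpace ℂ H]
    [CompleteSpace H] (π : G →* (H →L[ℂ] H))
    (hunit : ∀ (g : G) (x y : H), ⟪π g x, π g y⟫_ℂ = ⟪x, y⟫_ℂ)
    (Γ : Subgroup G) (L : Submodule ℂ H)
    (horth : ∀ γ γ' : Γ, γ ≠ γ' → ∀ x ∈ L, ∀ y ∈ L, ⟪π ↑γ x, π ↑γ' y⟫_ℂ = 0)
    (hgen : (⨆ γ : Γ, L.map (π ↑γ).toLinearMap).topologicalClosure = ⊤)
    (P : H →L[ℂ] H)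
    (hPmem : ∀ x : H, P x ∈ L) (hPfix : ∀ x ∈ L, P x = x)
    (hPorth : ∀ x : H, ∀ y ∈ L, ⟪x - P x, y⟫_ℂ = 0)
    (P₀ : H →L[ℂ] H) (hP₀idem : P₀.comp P₀ = P₀)
    (hP₀sa : ∀ x y : H, ⟪P₀ x, y⟫_ℂ = ⟪x, P₀ y⟫_ℂ)
    (hcomm : ∀ g : G, P₀.comp (π g) = (π g).comp P₀)
    (hsum : Summable fun γ : Γ => ‖P.comp (P₀.comp ((π ↑γ).comp (P₀.comp P)))‖) :
    (∑' γ : Γ, P.comp (P₀.comp ((π ↑γ).comp (P₀.comp P)))).comp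
        (∑' γ : Γ, P.comp (P₀.comp ((π ↑γ).comp (P₀.comp P))))
      = (∑' γ : Γ, P.comp (P₀.comp ((π ↑γ).comp (P₀.comp P)))) ∧
    (∀ x y : H, ⟪(∑' γ : Γ, P.comp (P₀.comp ((π ↑γ).comp (P₀.comp P)))) x, y⟫_ℂ
      = ⟪x, (∑' γ : Γ, P.comp (P₀.comp ((π ↑γ).comp (P₀.comp P)))) y⟫_ℂ) ∧
    (∀ x : H, (∑' γ : Γ, P.comp (P₀.comp ((π ↑γ).comp (P₀.comp P)))) x ∈ L) := by
  have hPidem : IsIdempotentElem P := ContinuousLinearMap.ext fun x => hPfix _ (hPmem x)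
  have hPsa := ContinuousLinearMap.isSelfAdjoint_of_inner_sub_eq_zero hPmem hPorth
  have hP₀ : IsSelfAdjoint P₀ := ContinuousLinearMap.isSelfAdjoint_iff_isSymmetric.2 hP₀sa
  have hres := hasSum_conj_apply_of_wandering hunit horth hgen hPmem hPfix hPsa
  refine ⟨isIdempotentElem_tsum_compressedRep hPidem hP₀idem hcomm hres hsum,
    (isSelfAdjoint_tsum_compressedRep hPsa hP₀ (star_map_eq_map_inv hunit)).isSymmetric,
    fun x => ?_⟩
  change (∑' γ : Γ, compressedRep P P₀ π γ) x ∈ L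
  rw [← mul_tsum_compressedRep hPidem hsum.of_norm]
  exact hPmem _
end
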